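/- Let R be the ring of integers of a number field, k ≥ 2, and suppose for some prime ideal 𝔭 and an ideal 𝔟 and elements a₁,…,aₛ ∈ R we have D(𝔭^k, 𝔟 | a₁,…,aₛ) = N(𝔭^k)/N(𝔭^k + 𝔟), where D(𝔭^k, 𝔟 | a₁,…,aₛ) counts residue classes b mod 𝔭^k with b ≡ aᵢ mod 𝔭^k for some i and b ∈ 𝔭^k + 𝔟. Then for every a ∈ 𝔟 there exists i with a + aᵢ ∈ 𝔭^k; consequently μ^(k)(a+a₁)⋯μ^(k)(a+aₛ) = 0 for all a ∈ 𝔟. -/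

import Mathlib

open scoped NumberField Classical

/-! The residue classes mod `𝔭^k` lying in `𝔭^k + 𝔟` form a set of exactly
`N(𝔭^k)/N(𝔭^k + 𝔟)` elements, so the hypothesis says that the classes of those `aᵢ` lying in
`𝔭^k + 𝔟` exhaust it. For `b ∈ 𝔟` the class of `-b` is among them, i.e. `b + aᵢ ∈ 𝔭^k` for
some `i`, and then `𝔭^k ∣ (b + aᵢ)` makes the `i`-th factor `μ^(k)(b + aᵢ)` vanish. -/

/-- The indicator `μ^(k)(b)` that the principal ideal `(b)` is `k`-free. -/
noncomputable def mukElem {K : Type*} [Field K] [NumberField K] (k : ℕ) (b : 𝓞 K) : ℝ :=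
  if ∀ 𝔭 : Ideal (𝓞 K), 𝔭.IsPrime → 𝔭 ≠ ⊥ → ¬ 𝔭 ^ k ∣ Ideal.span {b} then 1 else 0

/-- `D(𝔮, 𝔟 | a₁,…,aₛ)`: the number of residue classes `b` mod `𝔮` such that `b ≡ aᵢ mod 𝔮`
for some `i` and `b ∈ 𝔮 + 𝔟`. -/
noncomputable def DcountB {K : Type*} [Field K] [NumberField K] {s : ℕ}
    (𝔮 𝔟 : Ideal (𝓞 K)) (a : Fin s → 𝓞 K) : ℕ :=
  (((Finset.image a Finset.univ).filter (fun b => b ∈ 𝔮 + 𝔟)).image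
    (Ideal.Quotient.mk 𝔮)).card

theorem Submodule.eq_map_mkQ_of_ncard_mul_card_eq {R M : Type*} [Ring R] [AddCommGroup M]
    [Module R M] {S T : Submodule R M} (hTS : T ≤ S) [Finite (M ⧸ T)] {X : Set (M ⧸ T)}
    (hX : X ⊆ S.map T.mkQ) (hcard : X.ncard * Nat.card (M ⧸ S) = Nat.card (M ⧸ T)) :
    X = S.map T.mkQ := by
  have hST := card_quotient_mul_card_quotient S T hTS
  have hS : Nat.card (M ⧸ S) ≠ 0 := right_ne_zero_of_mul (hST ▸ Nat.card_pos.ne')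
  refine Set.eq_of_subset_of_ncard_le hX (le_of_eq ?_) (Set.toFinite _)
  rw [← Nat.card_coe_set_eq]
  exact Nat.eq_of_mul_eq_mul_right (Nat.pos_of_ne_zero hS) (hST.trans hcard.symm)

theorem exists_add_mem_of_dcountB_mul_absNorm_eq {K : Type*} [Field K] [NumberField K] {s : ℕ}
    {𝔮 𝔟 : Ideal (𝓞 K)} (h𝔮 : 𝔮 ≠ ⊥) {a : Fin s → 𝓞 K}
    (hD : DcountB 𝔮 𝔟 a * Ideal.absNorm (𝔮 + 𝔟) = Ideal.absNorm 𝔮) :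
    ∀ b ∈ 𝔟, ∃ i, b + a i ∈ 𝔮 := by
  have : Finite (𝓞 K ⧸ 𝔮) :=
    (Ideal.absNorm_ne_zero_iff 𝔮).mp (Ideal.absNorm_eq_zero_iff.not.mpr h𝔮)
  set X := ((Finset.image a Finset.univ).filter (· ∈ 𝔮 + 𝔟)).image (Ideal.Quotient.mk 𝔮)
  have hX : (X : Set (𝓞 K ⧸ 𝔮)) ⊆ Submodule.map 𝔮.mkQ (𝔮 + 𝔟) := by
    intro x hx
    obtain ⟨y, hy, rfl⟩ := Finset.mem_image.mp hx
    exact ⟨y, (Finset.mem_filter.mp hy).2, rfl⟩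
  have hXeq := Submodule.eq_map_mkQ_of_ncard_mul_card_eq le_sup_left hX
    (by rwa [Set.ncard_coe_finset])
  intro b hb
  have hneg : Ideal.Quotient.mk 𝔮 (-b) ∈ (X : Set (𝓞 K ⧸ 𝔮)) :=
    hXeq ▸ ⟨-b, Ideal.mem_sup_right (neg_mem hb), rfl⟩
  obtain ⟨y, hy, hyb⟩ := Finset.mem_image.mp hneg
  obtain ⟨i, -, rfl⟩ := Finset.mem_image.mp (Finset.mem_filter.mp hy).1
  refine ⟨i, ?_⟩
  simpa [add_comm] using Ideal.Quotient.eq.mp hyb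

theorem mukElem_eq_zero_of_mem_pow {K : Type*} [Field K] [NumberField K] {k : ℕ}
    {𝔭 : Ideal (𝓞 K)} (h𝔭 : 𝔭.IsPrime) (h𝔭' : 𝔭 ≠ ⊥) {b : 𝓞 K} (hb : b ∈ 𝔭 ^ k) :
    mukElem k b = 0 := by
  rw [mukElem, if_neg]
  push Not
  exact ⟨𝔭, h𝔭, h𝔭', Ideal.dvd_span_singleton.mpr hb⟩

theorem stmt13_general (K : Type*) [Field K] [NumberField K] (k : ℕ)
    (𝔭 : Ideal (𝓞 K)) (h𝔭 : 𝔭.IsPrime) (h𝔭' : 𝔭 ≠ ⊥)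
    (𝔟 : Ideal (𝓞 K)) (s : ℕ) (a : Fin s → 𝓞 K)
    (hD : DcountB (𝔭 ^ k) 𝔟 a * Ideal.absNorm (𝔭 ^ k + 𝔟) = Ideal.absNorm (𝔭 ^ k)) :
    ∀ b ∈ 𝔟, (∃ i, b + a i ∈ 𝔭 ^ k) ∧ ∏ i, mukElem k (b + a i) = 0 := by
  have h𝔭k : 𝔭 ^ k ≠ ⊥ := pow_ne_zero k h𝔭'
  intro b hb
  obtain ⟨i, hi⟩ := exists_add_mem_of_dcountB_mul_absNorm_eq h𝔭k hD b hb
  exact ⟨⟨i, hi⟩,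
    Finset.prod_eq_zero (Finset.mem_univ i) (mukElem_eq_zero_of_mem_pow h𝔭 h𝔭' hi)⟩

/-- If for some prime `𝔭` one has
`D(𝔭^k, 𝔟 | a₁,…,aₛ) = N(𝔭^k)/N(𝔭^k + 𝔟)` (stated multiplied out), then for every `a ∈ 𝔟`
there is an `i` with `a + aᵢ ∈ 𝔭^k`; consequently `μ^(k)(a+a₁)⋯μ^(k)(a+aₛ) = 0` for all
`a ∈ 𝔟`. -/
theorem stmt13 (K : Type*) [Field K] [NumberField K] (k : ℕ) (hk : 2 ≤ k)
    (𝔭 : Ideal (𝓞 K)) (h𝔭 : 𝔭.IsPrime) (h𝔭' : 𝔭 ≠ ⊥)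
    (𝔟 : Ideal (𝓞 K)) (h𝔟 : 𝔟 ≠ ⊥) (s : ℕ) (a : Fin s → 𝓞 K)
    (hD : DcountB (𝔭 ^ k) 𝔟 a * Ideal.absNorm (𝔭 ^ k + 𝔟) = Ideal.absNorm (𝔭 ^ k)) :
    ∀ b ∈ 𝔟, (∃ i, b + a i ∈ 𝔭 ^ k) ∧ ∏ i, mukElem k (b + a i) = 0 :=
  stmt13_general K k 𝔭 h𝔭 h𝔭' 𝔟 s a hD
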